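/- Proposition 3 (Feasibility of the controller QP). Assume X_r is compact and nonempty, and that for every (x,u) ∈ X_r there exists q ∈ ℝ^m such that: if b(u) = 0 then ⟨∇b(u), q⟩ > 0, and if h_r(x,u) = 0 then (∂h_r/∂u)(x,u)·q + (∂h_r/∂x)(x,u)·f(x,u) > 0. Then there exist α_f > 0 and γ_f > 0 such that for all α > α_f and all γ > γ_f, for every (x,u) ∈ X_r there exists q ∈ ℝ^m with ⟨∇b(u), q⟩ + α·b(u) ≥ 0 and (∂h_r/∂x)(x,u)·f(x,u) + (∂h_r/∂u)(x,u)·q + γ·h_r(x,u) ≥ 0. -/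

import Mathlib

/-! Fix a point `p` of `X_r` and the vector `q` given there by the constraint qualification.
Where `b(u) > 0`, the term `α b(u)` dominates `⟪∇b(u), q⟫` for `α` large, uniformly near `p`;
where `b(u) = 0`, the strict inequality `⟪∇b(u), q⟫ > 0` persists near `p` and `α b ≥ 0` does not
hurt. The same argument applies to `h_r` and `γ`, since `h_r` is `C¹`. So every point of `X_r`
has a neighbourhood on which one `q` works for all large `α, γ`, and compactness of `X_r` turns
these local thresholds into global ones. -/

open Set Filter Topology
open scoped RealInnerProductSpace

noncomputable def hseq {n m : ℕ}
    (f : EuclideanSpace ℝ (Fin n) × EuclideanSpace ℝ (Fin m) → EuclideanSpace ℝ (Fin n))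
    (h : EuclideanSpace ℝ (Fin n) → ℝ) (β : ℝ) :
    ℕ → EuclideanSpace ℝ (Fin n) × EuclideanSpace ℝ (Fin m) → ℝ
  | 0 => fun p => h p.1
  | i + 1 => fun p =>
      fderiv ℝ (fun x => hseq f h β i (x, p.2)) p.1 (f p) + β * hseq f h β i p

noncomputable def Xset {n m : ℕ}
    (f : EuclideanSpace ℝ (Fin n) × EuclideanSpace ℝ (Fin m) → EuclideanSpace ℝ (Fin n))
    (h : EuclideanSpace ℝ (Fin n) → ℝ) (b : EuclideanSpace ℝ (Fin m) → ℝ) (β : ℝ) (i : ℕ) :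
    Set (EuclideanSpace ℝ (Fin n) × EuclideanSpace ℝ (Fin m)) :=
  {p | 0 ≤ h p.1 ∧ 0 ≤ b p.2 ∧ 0 ≤ hseq f h β i p}

section PartialDerivatives

variable {𝕜 E F G : Type*} [NontriviallyNormedField 𝕜] [NormedAddCommGroup E] [NormedSpace 𝕜 E]
  [NormedAddCommGroup F] [NormedSpace 𝕜 F] [NormedAddCommGroup G] [NormedSpace 𝕜 G]
  {φ : E × F → G}

theorem fderiv_comp_prodMk_left {a : E} {c : F} (hφ : DifferentiableAt 𝕜 φ (a, c)) :
    fderiv 𝕜 (fun x => φ (x, c)) a = (fderiv 𝕜 φ (a, c)).comp (ContinuousLinearMap.inl 𝕜 E F) :=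
  (hφ.hasFDerivAt.comp a (hasFDerivAt_prodMk_left a c)).fderiv

theorem fderiv_comp_prodMk_right {a : E} {c : F} (hφ : DifferentiableAt 𝕜 φ (a, c)) :
    fderiv 𝕜 (fun u => φ (a, u)) c = (fderiv 𝕜 φ (a, c)).comp (ContinuousLinearMap.inr 𝕜 E F) :=
  (hφ.hasFDerivAt.comp c (hasFDerivAt_prodMk_right a c)).fderiv

theorem ContDiff.continuous_fderiv_comp_prodMk_left (hφ : ContDiff 𝕜 1 φ) :
    Continuous fun p : E × F => fderiv 𝕜 (fun x => φ (x, p.2)) p.1 := by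
  simp only [fderiv_comp_prodMk_left (hφ.differentiable one_ne_zero _)]
  exact (hφ.continuous_fderiv one_ne_zero).clm_comp continuous_const

theorem ContDiff.continuous_fderiv_comp_prodMk_right (hφ : ContDiff 𝕜 1 φ) :
    Continuous fun p : E × F => fderiv 𝕜 (fun u => φ (p.1, u)) p.2 := by
  simp only [fderiv_comp_prodMk_right (hφ.differentiable one_ne_zero _)]
  exact (hφ.continuous_fderiv one_ne_zero).clm_comp continuous_const

end PartialDerivatives

theorem contDiff_hseq {n m : ℕ}
    {f : EuclideanSpace ℝ (Fin n) × EuclideanSpace ℝ (Fin m) → EuclideanSpace ℝ (Fin n)}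
    {h : EuclideanSpace ℝ (Fin n) → ℝ} (β : ℝ) {i k : ℕ}
    (hf : ContDiff ℝ (i + k : ℕ) f) (hh : ContDiff ℝ (i + k : ℕ) h) :
    ContDiff ℝ k (hseq f h β i) := by
  induction i generalizing k with
  | zero => exact (by simpa using hh : ContDiff ℝ k h).comp contDiff_fst
  | succ i ih =>
    have hprev : ContDiff ℝ (k + 1 : ℕ) (hseq f h β i) :=
      ih (hf.of_le (by norm_cast; omega)) (hh.of_le (by norm_cast; omega))
    have hrec : hseq f h β (i + 1) =
        fun p => fderiv ℝ (hseq f h β i) p (f p, 0) + β * hseq f h β i p := by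
      funext p
      simp only [hseq, fderiv_comp_prodMk_left ((hprev.differentiable (by simp)) _)]
      rfl
    rw [hrec]
    exact ((hprev.fderiv_right (by norm_cast)).clm_apply
      ((hf.of_le (by norm_cast; omega)).prodMk contDiff_const)).add
      (contDiff_const.mul (hprev.of_le (by norm_cast; omega)))

theorem IsCompact.eventually_forall_mem_of_forall_eventually {X Y : Type*} [TopologicalSpace Y]
    {K : Set Y} (hK : IsCompact K) {l : Filter X} {P : X × Y → Prop}
    (hP : ∀ y ∈ K, ∀ᶠ z in l ×ˢ 𝓝 y, P z) : ∀ᶠ x in l, ∀ y ∈ K, P (x, y) :=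
  (show ∀ᶠ z in l ×ˢ 𝓝ˢ K, P z from hK.mem_prod_nhdsSet_of_forall hP).curry.mono
    fun _ h ↦ h.self_of_nhdsSet

theorem Filter.Tendsto.eventually_nonneg_add_mul {X ι : Type*} [TopologicalSpace X]
    {l : Filter ι} {c : ι → ℝ} (hc : Tendsto c l atTop) {G B : X → ℝ} {p : X}
    (hG : ContinuousAt G p) (hB : ContinuousAt B p) (hGp : B p = 0 → 0 < G p) :
    ∀ᶠ z in l ×ˢ 𝓝 p, 0 ≤ B z.2 → 0 ≤ G z.2 + c z.1 * B z.2 := by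
  rcases lt_trichotomy (B p) 0 with hBneg | hB0 | hBpos
  · filter_upwards [tendsto_snd.eventually (hB.eventually (gt_mem_nhds hBneg))]
      with z hz hz' using absurd hz' hz.not_ge
  · filter_upwards [tendsto_snd.eventually (hG.eventually (lt_mem_nhds (hGp hB0))),
      tendsto_fst.eventually (hc.eventually_ge_atTop 0)] with z hGz hcz hBz
    nlinarith
  · have hlim : Tendsto (fun z => G z.2 + c z.1 * B z.2) (l ×ˢ 𝓝 p) atTop :=
      (hG.tendsto.comp tendsto_snd).add_atTop
        ((hc.comp tendsto_fst).atTop_mul_pos hBpos (hB.tendsto.comp tendsto_snd))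
    filter_upwards [hlim.eventually_ge_atTop 0] with z hz _ using hz

theorem qp_feasibility_general
    {n m r : ℕ}
    (f : EuclideanSpace ℝ (Fin n) × EuclideanSpace ℝ (Fin m) → EuclideanSpace ℝ (Fin n))
    (h : EuclideanSpace ℝ (Fin n) → ℝ) (b : EuclideanSpace ℝ (Fin m) → ℝ)
    (hf : ContDiff ℝ (r + 1 : ℕ) f) (hh : ContDiff ℝ (r + 2 : ℕ) h) (hb : ContDiff ℝ 2 b)
    (β : ℝ)
    (hcomp : IsCompact (Xset f h b β r))
    (hcq : ∀ p ∈ Xset f h b β r, ∃ q : EuclideanSpace ℝ (Fin m),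
      (b p.2 = 0 → 0 < ⟪gradient b p.2, q⟫) ∧
      (hseq f h β r p = 0 →
        0 < fderiv ℝ (fun u => hseq f h β r (p.1, u)) p.2 q
          + fderiv ℝ (fun x => hseq f h β r (x, p.2)) p.1 (f p))) :
    ∃ αf > (0 : ℝ), ∃ γf > (0 : ℝ), ∀ α > αf, ∀ γ > γf,
      ∀ p ∈ Xset f h b β r, ∃ q : EuclideanSpace ℝ (Fin m),
        0 ≤ ⟪gradient b p.2, q⟫ + α * b p.2 ∧
        0 ≤ fderiv ℝ (fun x => hseq f h β r (x, p.2)) p.1 (f p)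
          + fderiv ℝ (fun u => hseq f h β r (p.1, u)) p.2 q + γ * hseq f h β r p := by
  set K := Xset f h b β r
  set H := hseq f h β r
  have hH : ContDiff ℝ 1 H := contDiff_hseq β hf (hh.of_le (by norm_cast; omega))
  have hb' : ContDiff ℝ 1 b := hb.of_le (by norm_num)
  have hlocal : ∀ p ∈ K, ∀ᶠ z in (atTop ×ˢ atTop : Filter (ℝ × ℝ)) ×ˢ 𝓝 p, z.2 ∈ K →
      ∃ q : EuclideanSpace ℝ (Fin m),
        0 ≤ ⟪gradient b z.2.2, q⟫ + z.1.1 * b z.2.2 ∧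
        0 ≤ fderiv ℝ (fun x => H (x, z.2.2)) z.2.1 (f z.2)
          + fderiv ℝ (fun u => H (z.2.1, u)) z.2.2 q + z.1.2 * H z.2 := by
    intro p hp
    obtain ⟨q, hqb, hqH⟩ := hcq p hp
    have hgrad : Continuous fun p' : EuclideanSpace ℝ (Fin n) × EuclideanSpace ℝ (Fin m) =>
        ⟪gradient b p'.2, q⟫ := by
      simp only [inner_gradient_left]
      exact ((hb'.continuous_fderiv one_ne_zero).comp continuous_snd).clm_apply continuous_const
    have hdH : Continuous fun p' => fderiv ℝ (fun x => H (x, p'.2)) p'.1 (f p')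
        + fderiv ℝ (fun u => H (p'.1, u)) p'.2 q :=
      (hH.continuous_fderiv_comp_prodMk_left.clm_apply hf.continuous).add
        (hH.continuous_fderiv_comp_prodMk_right.clm_apply continuous_const)
    filter_upwards [tendsto_fst.eventually_nonneg_add_mul hgrad.continuousAt
        (hb'.continuous.comp continuous_snd).continuousAt hqb,
      tendsto_snd.eventually_nonneg_add_mul hdH.continuousAt hH.continuous.continuousAt
        (fun h0 => (add_comm _ _).trans_gt (hqH h0))] with z hbz hHz hzK
    exact ⟨q, hbz hzK.2.1, hHz hzK.2.2⟩
  have hglobal := hcomp.eventually_forall_mem_of_forall_eventually hlocal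
  rw [prod_atTop_atTop_eq] at hglobal
  obtain ⟨a, ha⟩ := eventually_atTop_prod_self'.mp hglobal
  refine ⟨max a 1, by positivity, max a 1, by positivity, fun α hα γ hγ p hp => ?_⟩
  exact ha α (le_of_max_le_left hα.le) γ (le_of_max_le_left hγ.le) p hp hp

/-- Proposition 3 (Feasibility of the controller QP). If `X_r` is compact and nonempty and the
MFCQ-type condition holds at every point of `X_r`, then there exist `α_f, γ_f > 0` such that for
all `α > α_f`, `γ > γ_f`, the controller QP is feasible at every point of `X_r`. -/
theorem qp_feasibility
    {n m r : ℕ} (hn : 0 < n) (hm : 0 < m) (hr : 0 < r)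
    (f : EuclideanSpace ℝ (Fin n) × EuclideanSpace ℝ (Fin m) → EuclideanSpace ℝ (Fin n))
    (h : EuclideanSpace ℝ (Fin n) → ℝ) (b : EuclideanSpace ℝ (Fin m) → ℝ)
    (hf : ContDiff ℝ (r + 1 : ℕ) f) (hh : ContDiff ℝ (r + 2 : ℕ) h) (hb : ContDiff ℝ 2 b)
    (β : ℝ) (hβ : 0 < β)
    (hcomp : IsCompact (Xset f h b β r)) (hne : (Xset f h b β r).Nonempty)
    (hcq : ∀ p ∈ Xset f h b β r, ∃ q : EuclideanSpace ℝ (Fin m),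
      (b p.2 = 0 → 0 < ⟪gradient b p.2, q⟫) ∧
      (hseq f h β r p = 0 →
        0 < fderiv ℝ (fun u => hseq f h β r (p.1, u)) p.2 q
          + fderiv ℝ (fun x => hseq f h β r (x, p.2)) p.1 (f p))) :
    ∃ αf > (0 : ℝ), ∃ γf > (0 : ℝ), ∀ α > αf, ∀ γ > γf,
      ∀ p ∈ Xset f h b β r, ∃ q : EuclideanSpace ℝ (Fin m),
        0 ≤ ⟪gradient b p.2, q⟫ + α * b p.2 ∧
        0 ≤ fderiv ℝ (fun x => hseq f h β r (x, p.2)) p.1 (f p)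
          + fderiv ℝ (fun u => hseq f h β r (p.1, u)) p.2 q + γ * hseq f h β r p :=
  qp_feasibility_general f h b hf hh hb β hcomp hcq
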